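/- Let w = (w_k)_{k∈ℤ} be a bounded bilateral weight and B_w the bilateral weighted backward shift on X = ℓ^p(ℤ) (1 ≤ p < ∞) or c₀(ℤ). If B_w is topologically 𝒟-recurrent, then for every r ∈ ℕ, every M > 0, every j ∈ ℤ and every 1 ≤ l ≤ r, one has A_{M;j} ∈ l𝒟* and Ā_{M;j} ∈ l𝒟*. -/

import Mathlib

open Filter Topology
open scoped ENNReal

noncomputable def blockCount (A : Set ℕ) (k s : ℕ) : ℕ :=
  Nat.card (A ∩ Set.Icc (k + 1) (k + s) : Set ℕ)

/-- upper Banach density -/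
noncomputable def upperBanachDensity (A : Set ℕ) : ℝ :=
  Filter.limsup (fun s : ℕ =>
    (Filter.limsup (fun k : ℕ => (blockCount A k s : ℝ)) Filter.atTop) / s) Filter.atTop

/-- lower Banach density -/
noncomputable def lowerBanachDensity (A : Set ℕ) : ℝ :=
  Filter.liminf (fun s : ℕ =>
    (Filter.liminf (fun k : ℕ => (blockCount A k s : ℝ)) Filter.atTop) / s) Filter.atTop

/-- the family `BD̄` of sets of positive upper Banach density -/
def upperBD (A : Set ℕ) : Prop := 0 < upperBanachDensity A

/-- the family `BD₁` of sets of lower Banach density one -/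
def BDone (A : Set ℕ) : Prop := lowerBanachDensity A = 1

/-- essential idempotent ultrafilter -/
def IsEssentialIdempotent (p : Ultrafilter ℕ) : Prop :=
  (∀ A : Set ℕ, A ∈ p ↔ {n : ℕ | {m : ℕ | n + m ∈ A} ∈ p} ∈ p) ∧
    ∀ A ∈ p, 0 < upperBanachDensity A

/-- membership in `𝒟*`, the intersection of all essential idempotents -/
def InDstar (A : Set ℕ) : Prop :=
  ∀ p : Ultrafilter ℕ, IsEssentialIdempotent p → A ∈ p

/-- limit of a real sequence along a family of subsets of ℕ -/
def FamilyLim (F : Set ℕ → Prop) (x : ℕ → ℝ) (y : ℝ) : Prop :=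
  ∀ V : Set ℝ, IsOpen V → y ∈ V → F {n | x n ∈ V}

/-- property `P_𝓕` for a sequence of maps -/
def SatisfiesP {X : Type*} [TopologicalSpace X] (T : ℕ → X → X) (F : Set ℕ → Prop) : Prop :=
  ∀ U : Set X, IsOpen U → U.Nonempty → ∃ x : X, F {n | T n x ∈ U}

/-- topological 𝒟-recurrence with respect to a sequence of scalars -/
def TopDRecurrentWrt {X : Type*} [NormedAddCommGroup X] [NormedSpace ℂ X]
    (T : X →L[ℂ] X) (l : ℕ → ℂ) : Prop :=
  ∃ p : Ultrafilter ℕ, IsEssentialIdempotent p ∧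
    ∀ U : Set X, IsOpen U → U.Nonempty → ∃ x : X, ∀ r : ℕ,
      {k : ℕ | 0 < upperBanachDensity
        {a : ℕ | ∀ j ≤ r, (T ^ (j * k)) (l a • (T ^ a) x) ∈ U}} ∈ p

/-- topological 𝒟-recurrence -/
def TopDRecurrent {X : Type*} [NormedAddCommGroup X] [NormedSpace ℂ X]
    (T : X →L[ℂ] X) : Prop :=
  TopDRecurrentWrt T fun _ => 1

/-- reiterative hypercyclicity for a sequence of maps -/
def ReiterativelyHypercyclicSeq {X : Type*} [TopologicalSpace X] (T : ℕ → X → X) : Prop :=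
  ∃ x : X, ∀ U : Set X, IsOpen U → U.Nonempty → 0 < upperBanachDensity {n | T n x ∈ U}

/-- 𝒟-reiterative hypercyclicity with respect to a sequence of scalars -/
def DReiterativelyHypercyclicWrt {X : Type*} [NormedAddCommGroup X] [NormedSpace ℂ X]
    (T : X →L[ℂ] X) (l : ℕ → ℂ) : Prop :=
  ∃ p : Ultrafilter ℕ, IsEssentialIdempotent p ∧ ∃ x : X,
    ∀ U : Set X, IsOpen U → U.Nonempty → ∀ r : ℕ,
      {k : ℕ | 0 < upperBanachDensity
        {a : ℕ | ∀ j ≤ r, (T ^ (j * k)) (l a • (T ^ a) x) ∈ U}} ∈ p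

/-- hypercyclic operator -/
def Hypercyclic {X : Type*} [NormedAddCommGroup X] [NormedSpace ℂ X] (T : X →L[ℂ] X) : Prop :=
  ∃ x : X, Dense (Set.range fun n : ℕ => (T ^ n) x)

/-- topological multiple recurrence -/
def TopMultiplyRecurrent {X : Type*} [NormedAddCommGroup X] [NormedSpace ℂ X]
    (T : X →L[ℂ] X) : Prop :=
  ∀ U : Set X, IsOpen U → U.Nonempty → ∀ r : ℕ, ∃ k : ℕ, 0 < k ∧
    ∃ x : X, ∀ j ≤ r, (T ^ (j * k)) x ∈ U

/-- `𝓕`-operator -/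
def FOperator {X : Type*} [NormedAddCommGroup X] [NormedSpace ℂ X]
    (F : Set ℕ → Prop) (T : X →L[ℂ] X) : Prop :=
  ∀ U V : Set X, IsOpen U → IsOpen V → U.Nonempty → V.Nonempty →
    F {n : ℕ | ∃ x ∈ U, (T ^ n) x ∈ V}

/-- mixing operator -/
def MixingOp {X : Type*} [NormedAddCommGroup X] [NormedSpace ℂ X]
    (T : X →L[ℂ] X) : Prop :=
  ∀ U V : Set X, IsOpen U → IsOpen V → U.Nonempty → V.Nonempty →
    {n : ℕ | ∃ x ∈ U, (T ^ n) x ∈ V} ∈ Filter.cofinite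

/-- recurrent operator -/
def RecurrentOp {X : Type*} [NormedAddCommGroup X] [NormedSpace ℂ X]
    (T : X →L[ℂ] X) : Prop :=
  ∀ U : Set X, IsOpen U → U.Nonempty →
    ∃ n : ℕ, 0 < n ∧ (U ∩ (fun x => (T ^ n) x) ⁻¹' U).Nonempty

/-- syndetic set -/
def Syndetic (A : Set ℕ) : Prop :=
  ∃ k : ℕ, 0 < k ∧ ∀ n : ℕ, ∃ i : ℕ, 1 ≤ i ∧ i ≤ k ∧ n + i ∈ A

/-- upper (asymptotic) density -/
noncomputable def upperDensity (A : Set ℕ) : ℝ :=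
  Filter.limsup (fun n : ℕ => (Nat.card (A ∩ Set.Icc 1 n : Set ℕ) : ℝ) / n) Filter.atTop

/-- bounded weight -/
def BddWeight {ι : Type*} (w : ι → ℂ) : Prop := ∃ C : ℝ, ∀ i, ‖w i‖ ≤ C

/-- unilateral weighted backward shift relative to a basis `e` -/
def IsUnilateralWeightedShift {X : Type*} [NormedAddCommGroup X] [NormedSpace ℂ X]
    (e : ℕ → X) (w : ℕ → ℂ) (B : X →L[ℂ] X) : Prop :=
  B (e 0) = 0 ∧ ∀ n : ℕ, B (e (n + 1)) = w (n + 1) • e n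

/-- bilateral weighted backward shift relative to a basis `e` -/
def IsBilateralWeightedShift {X : Type*} [NormedAddCommGroup X] [NormedSpace ℂ X]
    (e : ℤ → X) (w : ℤ → ℂ) (B : X →L[ℂ] X) : Prop :=
  ∀ k : ℤ, B (e k) = w k • e (k - 1)

/-- `B ⊕ B² ⊕ ⋯ ⊕ B^r` acting on `X^r` -/
noncomputable def directSumPow {X : Type*} [NormedAddCommGroup X] [NormedSpace ℂ X]
    (T : X →L[ℂ] X) (r : ℕ) : (Fin r → X) →L[ℂ] (Fin r → X) :=
  ContinuousLinearMap.pi fun i => (T ^ ((i : ℕ) + 1)).comp (ContinuousLinearMap.proj i)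

/-- canonical basis vector of `c₀` over a discrete index type -/
noncomputable def c0Single {α : Type*} [TopologicalSpace α] [DiscreteTopology α]
    [DecidableEq α] (k : α) : ZeroAtInftyContinuousMap α ℂ where
  toFun := fun m => if m = k then 1 else 0
  continuous_toFun := continuous_of_discreteTopology
  zero_at_infty' := by
    rw [Filter.cocompact_eq_cofinite]
    refine Filter.Tendsto.congr' ?_ tendsto_const_nhds
    filter_upwards [Filter.eventually_cofinite_ne k] with m hm
    simp [hm]

/-- the set `A_{M;j}` for a bilateral weight -/
def AMjZ (w : ℤ → ℂ) (M : ℝ) (j : ℤ) : Set ℕ :=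
  {n : ℕ | M < ∏ i ∈ Finset.Icc (j + 1) (j + (n : ℤ)), ‖w i‖}

/-- the set `Ā_{M;j}` for a bilateral weight -/
def AbarMjZ (w : ℤ → ℂ) (M : ℝ) (j : ℤ) : Set ℕ :=
  {n : ℕ | ∏ i ∈ Finset.Icc (j - (n : ℤ) + 1) j, ‖w i‖ < 1 / M}

/-- the set `A_{M;j}` for a unilateral weight -/
def AMjN (w : ℕ → ℂ) (M : ℝ) (j : ℕ) : Set ℕ :=
  {n : ℕ | M < ∏ i ∈ Finset.Icc (j + 1) (j + n), ‖w i‖}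

/-!
If `B` is 𝒟-recurrent, some orbit `Bᵃ x` visits a small ball around `e j` for all `a` in a set
`D` of positive upper Banach density. Whenever `d` and `d + N` both lie in `D`, comparing the
coordinates `j` and `j ± N` of `B^d x` and `B^(d + N) x` forces `∏_{(j, j+N]} |wᵢ| > M` and
`∏_{(j-N, j]} |wᵢ| < 1/M`. It remains to see that `{n | l n ∈ D - D}` belongs to every essential
idempotent `q`: otherwise idempotence of `q` yields chains `s₀ < ⋯ < sₘ` of any length with all
differences outside that set, while the positive density of `D` forces two of the translates
`D + l sᵢ` to meet.
-/

open Finset in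
lemma blockCount_eq_card_filter (A : Set ℕ) [DecidablePred (· ∈ A)] (k s : ℕ) :
    blockCount A k s = #{n ∈ Icc (k + 1) (k + s) | n ∈ A} := by
  have : (A ∩ Set.Icc (k + 1) (k + s) : Set ℕ) = ↑{n ∈ Icc (k + 1) (k + s) | n ∈ A} := by
    ext; simp [and_comm]
  rw [blockCount, this, Nat.card_coe_set_eq, Set.ncard_coe_finset]

lemma blockCount_le (A : Set ℕ) (k s : ℕ) : blockCount A k s ≤ s := by
  classical
  rw [blockCount_eq_card_filter]
  exact (Finset.card_filter_le _ _).trans (by simp)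

lemma exists_frequently_le_blockCount {A : Set ℕ} (hA : 0 < upperBanachDensity A) :
    ∃ δ : ℝ, 0 < δ ∧ ∃ᶠ s in atTop, ∃ᶠ k in atTop, δ * s ≤ (blockCount A k s : ℝ) := by
  set f : ℕ → ℝ := fun s => limsup (fun k => (blockCount A k s : ℝ)) atTop
  have hf : ∀ s, 0 ≤ f s := fun s => le_limsup_of_frequently_le
    (.of_forall fun _ => by positivity)
    (isBoundedUnder_of ⟨s, fun k => by exact_mod_cast blockCount_le A k s⟩)
  refine ⟨upperBanachDensity A / 2, by positivity, ?_⟩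
  have hfreq : ∃ᶠ s in atTop, upperBanachDensity A / 2 < f s / s :=
    frequently_lt_of_lt_limsup
      (isBoundedUnder_of ⟨0, fun s => div_nonneg (hf s) s.cast_nonneg⟩).isCoboundedUnder_flip
      (half_lt_self hA)
  refine (hfreq.and_eventually (eventually_gt_atTop 0)).mono fun s ⟨hs, hs0⟩ => ?_
  have : upperBanachDensity A / 2 * s < f s := (lt_div_iff₀ (by positivity)).1 hs
  exact (frequently_lt_of_lt_limsup
    (isBoundedUnder_of ⟨0, fun k => by positivity⟩).isCoboundedUnder_flip this).mono
      fun _ => le_of_lt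

lemma Set.infinite_of_upperBanachDensity_pos {A : Set ℕ} (hA : 0 < upperBanachDensity A) :
    A.Infinite := by
  classical
  obtain ⟨δ, hδ, hfreq⟩ := exists_frequently_le_blockCount hA
  refine Set.infinite_of_forall_exists_gt fun n => ?_
  obtain ⟨s, hs, hs0⟩ := (hfreq.and_eventually (eventually_gt_atTop 0)).exists
  obtain ⟨k, hk, hkn⟩ := (hs.and_eventually (eventually_ge_atTop n)).exists
  have : 0 < blockCount A k s := by
    exact_mod_cast (by positivity : (0 : ℝ) < δ * s).trans_le hk
  obtain ⟨a, ha⟩ := Finset.card_pos.1 (blockCount_eq_card_filter A k s ▸ this)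
  simp only [Finset.mem_filter, Finset.mem_Icc] at ha
  exact ⟨a, ha.2, by omega⟩

open Finset in
/-- Among `m + 1` translates of a large enough piece of `D`, two must overlap. -/
lemma exists_add_sub_mem_of_upperBanachDensity_pos {D : Set ℕ}
    (hD : 0 < upperBanachDensity D) :
    ∃ m, ∀ s : ℕ → ℕ, StrictMonoOn s (Set.Iic m) →
      ∃ i j, i < j ∧ j ≤ m ∧ ∃ d ∈ D, d + (s j - s i) ∈ D := by
  classical
  obtain ⟨δ, hδ, hfreq⟩ := exists_frequently_le_blockCount hD
  refine ⟨⌈2 / δ⌉₊, fun s hs => ?_⟩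
  set m := ⌈2 / δ⌉₊
  obtain ⟨L, hL, hmL⟩ := (hfreq.and_eventually (eventually_gt_atTop (s m))).exists
  obtain ⟨K, hK⟩ := hL.exists
  set W := {n ∈ Icc (K + 1) (K + L) | n ∈ D}
  have hcard : #(Icc (K + 1) (K + L + s m)) < #(range (m + 1) ×ˢ W) := by
    have hm : 2 ≤ m * δ := (div_le_iff₀ hδ).1 (Nat.le_ceil _)
    rw [blockCount_eq_card_filter] at hK
    have : ((L + s m : ℕ) : ℝ) < ((m + 1) * #W : ℕ) := by
      push_cast
      have : (s m : ℝ) < L := by exact_mod_cast hmL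
      nlinarith
    rw [Nat.card_Icc, card_product, card_range]
    exact_mod_cast (by omega : K + L + s m + 1 - (K + 1) = L + s m) ▸ this
  have hmaps : ∀ x ∈ range (m + 1) ×ˢ W, x.2 + s x.1 ∈ Icc (K + 1) (K + L + s m) := by
    rintro ⟨i, a⟩ hia
    simp only [mem_product, mem_range, mem_filter, mem_Icc, W] at hia ⊢
    have := hs.monotoneOn (a := i) (b := m) (by simp; omega) (by simp) (by omega)
    omega
  obtain ⟨⟨i, a⟩, hia, ⟨i', a'⟩, hia', hne, heq⟩ :=
    exists_ne_map_eq_of_card_lt_of_maps_to hcard hmaps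
  simp only [mem_product, mem_range, mem_filter, mem_Icc, W] at hia hia' heq
  wlog hii' : i < i' generalizing i i' a a'
  · refine this i' a' i a hne.symm heq.symm hia' hia (lt_of_le_of_ne (not_lt.1 hii') ?_)
    rintro rfl
    exact hne (Prod.ext rfl (by omega))
  have := hs (by simp; omega) (by simp; omega) hii'
  refine ⟨i, i', hii', by omega, a', hia'.2.2, ?_⟩
  rw [show a' + (s i' - s i) = a by omega]
  exact hia.2.2

lemma InDstar.mono {A B : Set ℕ} (hA : InDstar A) (hAB : A ⊆ B) : InDstar B :=
  fun q hq => Filter.mem_of_superset (hA q hq) hAB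

namespace IsEssentialIdempotent

variable {q : Ultrafilter ℕ}

lemma infinite_of_mem (hq : IsEssentialIdempotent q) {A : Set ℕ} (hA : A ∈ q) : A.Infinite :=
  Set.infinite_of_upperBanachDensity_pos (hq.2 A hA)

/-- Idempotence lets one keep extending the chain: the invariant `E` records the future
increments `y` for which all new differences `s m - s i + y` stay in `C`. -/
lemma exists_strictMonoOn_sub_mem (hq : IsEssentialIdempotent q) {C : Set ℕ} (hC : C ∈ q)
    (m : ℕ) : ∃ s : ℕ → ℕ, StrictMonoOn s (Set.Iic m) ∧
      ∀ i j, i < j → j ≤ m → s j - s i ∈ C := by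
  suffices ∃ s : ℕ → ℕ, ∃ E ∈ q, StrictMonoOn s (Set.Iic m) ∧
      (∀ i j, i < j → j ≤ m → s j - s i ∈ C) ∧ ∀ i ≤ m, ∀ y ∈ E, s m - s i + y ∈ C by
    obtain ⟨s, -, -, hs, hsC, -⟩ := this
    exact ⟨s, hs, hsC⟩
  induction m with
  | zero =>
    refine ⟨fun _ => 0, C, hC, fun a ha b hb hab => ?_, by omega, by simp⟩
    simp only [Set.mem_Iic, nonpos_iff_eq_zero] at ha hb
    omega
  | succ m ih =>
    obtain ⟨s, E, hE, hs, hsC, hEC⟩ := ih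
    obtain ⟨y, ⟨hyE, hyq⟩, hy⟩ := (hq.infinite_of_mem (inter_mem hE ((hq.1 E).1 hE))).exists_gt 0
    have hsm : ∀ i ≤ m, s i ≤ s m := fun i hi => hs.monotoneOn hi Set.self_mem_Iic hi
    refine ⟨fun i => if i ≤ m then s i else s m + y, E ∩ {z | y + z ∈ E}, inter_mem hE hyq,
      fun a ha b hb hab => ?_, fun i j hij hj => ?_, fun i hi z ⟨hzE, hyz⟩ => ?_⟩
    · simp only [Set.mem_Iic] at ha hb
      by_cases hbm : b ≤ m
      · simpa [hbm, hab.le.trans hbm] using hs (a := a) (by simp; omega) hbm hab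
      · simp only [show a ≤ m by omega, hbm, if_true, if_false]
        have := hsm a (by omega)
        omega
    · by_cases hjm : j ≤ m
      · simpa [hjm, hij.le.trans hjm] using hsC i j hij hjm
      · simp only [show i ≤ m by omega, hjm, if_true, if_false]
        have := hsm i (by omega)
        rw [show s m + y - s i = s m - s i + y by omega]
        exact hEC i (by omega) y hyE
    · by_cases him : i ≤ m
      · simp only [him, if_true, show ¬m + 1 ≤ m by omega, if_false]
        have := hsm i him
        rw [show s m + y - s i + z = s m - s i + (y + z) by omega]
        exact hEC i him _ hyz
      · simpa [him] using hEC m le_rfl z hzE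

end IsEssentialIdempotent

theorem inDstar_setOf_exists_add_mul_mem {D : Set ℕ} (hD : 0 < upperBanachDensity D) {l : ℕ}
    (hl : 0 < l) : InDstar {n | 0 < n ∧ ∃ d ∈ D, d + l * n ∈ D} := by
  intro q hq
  by_contra hS
  obtain ⟨m, hm⟩ := exists_add_sub_mem_of_upperBanachDensity_pos hD
  obtain ⟨s, hs, hsC⟩ := hq.exists_strictMonoOn_sub_mem (Ultrafilter.compl_mem_iff_notMem.2 hS) m
  obtain ⟨i, j, hij, hjm, d, hd, hdD⟩ :=
    hm (l * s ·) ((strictMono_mul_left_of_pos hl).comp_strictMonoOn hs)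
  refine hsC i j hij hjm ⟨Nat.sub_pos_of_lt (hs (by simp; omega) (by simpa) hij), d, hd, ?_⟩
  rwa [Nat.mul_sub]

lemma TopDRecurrent.exists_upperBanachDensity_pos {X : Type*} [NormedAddCommGroup X]
    [NormedSpace ℂ X] {T : X →L[ℂ] X} (hT : TopDRecurrent T) {U : Set X} (hU : IsOpen U)
    (hne : U.Nonempty) : ∃ x : X, 0 < upperBanachDensity {a | (T ^ a) x ∈ U} := by
  obtain ⟨p, -, hp⟩ := hT
  obtain ⟨x, hx⟩ := hp U hU hne
  obtain ⟨k, hk⟩ := Ultrafilter.nonempty_of_mem (hx 0)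
  exact ⟨x, by simpa using hk⟩

section WeightedShift

variable {X : Type*} [NormedAddCommGroup X] [NormedSpace ℂ X] {B : X →L[ℂ] X} {e : ℤ → X}
  {w : ℤ → ℂ} {φ : ℤ → X →L[ℂ] ℂ}

lemma IsBilateralWeightedShift.coord_comp (hB : IsBilateralWeightedShift e w B)
    (he : Dense (Submodule.span ℂ (Set.range e) : Set X))
    (hφe : ∀ m k, φ m (e k) = if k = m then 1 else 0) (m : ℤ) :
    (φ m).comp B = w (m + 1) • φ (m + 1) := by
  refine ContinuousLinearMap.ext_on he ?_
  rintro _ ⟨k, rfl⟩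
  by_cases hk : k = m + 1
  · subst hk
    simp [hB (m + 1), hφe]
  · simp [hB k, hφe, hk, show k - 1 ≠ m by omega]

lemma coord_pow_apply (hφB : ∀ m, (φ m).comp B = w (m + 1) • φ (m + 1)) (n : ℕ) (m : ℤ)
    (x : X) : φ m ((B ^ n) x) = (∏ i ∈ Finset.Icc (m + 1) (m + n), w i) * φ (m + n) x := by
  induction n generalizing x with
  | zero => simp
  | succ n ih =>
    have hφ := congr($(hφB (m + n)) x)
    rw [ContinuousLinearMap.comp_apply] at hφ
    rw [pow_succ, mul_apply_eq_comp, ih, hφ, Nat.cast_succ, ← add_assoc,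
      ← Finset.insert_Icc_right_eq_Icc_add_one (by omega), Finset.prod_insert (by simp)]
    simp only [smul_apply, smul_eq_mul]
    ring

/-- If `y` and `Bᴺ y` both lie close to `e j`, then `Bᴺ` has transported the mass of the
coordinate `j + N` of `y` to coordinate `j`, and that of `j` to `j - N`; so the weights over
`(j, j + N]` must be large and those over `(j - N, j]` small. -/
lemma mem_AMjZ_and_mem_AbarMjZ (hφ : ∀ m, ‖φ m‖ ≤ 1)
    (hφe : ∀ m k, φ m (e k) = if k = m then 1 else 0)
    (hφB : ∀ m, (φ m).comp B = w (m + 1) • φ (m + 1)) {M : ℝ} (hM : 0 < M) {j : ℤ} {N : ℕ}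
    (hN : 0 < N) {y : X} (hy : y ∈ Metric.ball (e j) (1 / (M + 2)))
    (hNy : (B ^ N) y ∈ Metric.ball (e j) (1 / (M + 2))) :
    N ∈ AMjZ w M j ∧ N ∈ AbarMjZ w M j := by
  -- `ε = 1 / (M + 2)` makes `(1 - ε) / ε = M + 1` and `ε / (1 - ε) = 1 / (M + 1)`.
  set ε := 1 / (M + 2) with hε
  have hεM : ε * (M + 2) = 1 := by rw [hε]; field_simp
  have near : ∀ z ∈ Metric.ball (e j) ε, ∀ m, ‖φ m z - if j = m then 1 else 0‖ < ε :=
    fun z hz m => calc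
      _ = ‖φ m (z - e j)‖ := by rw [map_sub, hφe]
      _ ≤ ‖z - e j‖ := ((φ m).le_of_opNorm_le (hφ m) _).trans_eq (one_mul _)
      _ < ε := by rwa [← dist_eq_norm]
  have large : ∀ z ∈ Metric.ball (e j) ε, 1 - ε < ‖φ j z‖ := fun z hz => by
    have := near z hz j
    simp only [if_true] at this
    linarith [norm_sub_norm_le (1 : ℂ) (φ j z), norm_sub_rev (1 : ℂ) (φ j z), norm_one (α := ℂ)]
  have small : ∀ z ∈ Metric.ball (e j) ε, ∀ m ≠ j, ‖φ m z‖ < ε := fun z hz m hm => by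
    simpa [Ne.symm hm] using near z hz m
  have hP : 1 - ε < (∏ i ∈ Finset.Icc (j + 1) (j + N), ‖w i‖) * ε := by
    have h := large _ hNy
    rw [coord_pow_apply hφB, norm_mul, norm_prod] at h
    exact h.trans_le (mul_le_mul_of_nonneg_left (small y hy _ (by omega)).le (by positivity))
  have hQ : (∏ i ∈ Finset.Icc (j - N + 1) j, ‖w i‖) * (1 - ε) < ε := by
    have h := small _ hNy (j - N) (by omega)
    rw [coord_pow_apply hφB, sub_add_cancel, norm_mul, norm_prod] at h
    exact (mul_le_mul_of_nonneg_left (large y hy).le (by positivity)).trans_lt h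
  constructor
  · show M < _
    nlinarith
  · show _ < 1 / M
    rw [lt_div_iff₀ hM]
    nlinarith [Finset.prod_nonneg fun i (_ : i ∈ Finset.Icc (j - N + 1) j) => norm_nonneg (w i)]

theorem inDstar_of_topDRecurrent (he : Dense (Submodule.span ℂ (Set.range e) : Set X))
    (hφ : ∀ m, ‖φ m‖ ≤ 1) (hφe : ∀ m k, φ m (e k) = if k = m then 1 else 0)
    (hB : IsBilateralWeightedShift e w B) (hrec : TopDRecurrent B) {M : ℝ} (hM : 0 < M)
    (j : ℤ) {l : ℕ} (hl : 0 < l) :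
    InDstar {k | l * k ∈ AMjZ w M j} ∧ InDstar {k | l * k ∈ AbarMjZ w M j} := by
  set U := Metric.ball (e j) (1 / (M + 2))
  obtain ⟨x, hx⟩ := hrec.exists_upperBanachDensity_pos (U := U) Metric.isOpen_ball
    ⟨e j, Metric.mem_ball_self (by positivity)⟩
  have hmem : ∀ n ∈ {n | 0 < n ∧ ∃ d ∈ {a | (B ^ a) x ∈ U}, d + l * n ∈ {a | (B ^ a) x ∈ U}},
      l * n ∈ AMjZ w M j ∧ l * n ∈ AbarMjZ w M j := by
    rintro n ⟨hn, d, hd, hdn⟩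
    rw [Set.mem_ofPred_eq, add_comm d, pow_add, mul_apply_eq_comp] at hdn
    exact mem_AMjZ_and_mem_AbarMjZ hφ hφe (hB.coord_comp he hφe) hM (by positivity) hd hdn
  have hS := inDstar_setOf_exists_add_mul_mem hx hl
  exact ⟨hS.mono fun n hn => (hmem n hn).1, hS.mono fun n hn => (hmem n hn).2⟩

end WeightedShift

open scoped ZeroAtInfty

namespace ZeroAtInftyContinuousMap

variable {α 𝕜 β : Type*} [TopologicalSpace α] [NontriviallyNormedField 𝕜] [NormedAddCommGroup β]
  [NormedSpace 𝕜 β]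

variable (𝕜) in
noncomputable def evalCLM (x : α) : C₀(α, β) →L[𝕜] β :=
  LinearMap.mkContinuous
    { toFun := fun f => f x, map_add' := fun _ _ => rfl, map_smul' := fun _ _ => rfl } 1
    fun f => by simpa [← norm_toBCF_eq_norm] using f.toBCF.norm_coe_le_norm x

@[simp]
lemma evalCLM_apply (x : α) (f : C₀(α, β)) : evalCLM 𝕜 x f = f x := rfl

lemma norm_evalCLM_le (x : α) : ‖(evalCLM 𝕜 x : C₀(α, β) →L[𝕜] β)‖ ≤ 1 :=
  LinearMap.mkContinuous_norm_le _ zero_le_one _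

end ZeroAtInftyContinuousMap

lemma dense_span_range_c0Single {α : Type*} [TopologicalSpace α] [DiscreteTopology α]
    [DecidableEq α] :
    Dense (Submodule.span ℂ (Set.range (c0Single (α := α))) : Set C₀(α, ℂ)) := by
  refine Metric.dense_iff.2 fun x ε hε => ?_
  have hfin : {m | ε / 2 ≤ ‖x m‖}.Finite := by
    have := x.zero_at_infty'
    rw [cocompact_eq_cofinite] at this
    simpa using eventually_cofinite.1 (this.eventually (Metric.ball_mem_nhds 0 (half_pos hε)))
  refine ⟨∑ k ∈ hfin.toFinset, x k • c0Single k, ?_,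
    Submodule.sum_mem _ fun k _ =>
      Submodule.smul_mem _ _ (Submodule.subset_span (Set.mem_range_self k))⟩
  have hsum : ∀ m, (∑ k ∈ hfin.toFinset, x k • c0Single k) m =
      if ε / 2 ≤ ‖x m‖ then x m else 0 := fun m => by
    rw [← ZeroAtInftyContinuousMap.evalCLM_apply (𝕜 := ℂ), map_sum]
    simp [c0Single]
  rw [Metric.mem_ball, dist_eq_norm, ← ZeroAtInftyContinuousMap.norm_toBCF_eq_norm]
  refine ((BoundedContinuousFunction.norm_le (half_pos hε).le).2 fun m => ?_).trans_lt
    (half_lt_self hε)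
  by_cases hm : ε / 2 ≤ ‖x m‖
  · simpa [hsum, hm] using (half_pos hε).le
  · simpa [hsum, hm] using (not_le.1 hm).le

lemma lp.dense_span_range_single {α : Type*} [DecidableEq α] {p : ℝ≥0∞} [Fact (1 ≤ p)]
    (hp : p ≠ ∞) :
    Dense (Submodule.span ℂ (Set.range fun k : α => lp.single p k (1 : ℂ)) :
      Set (lp (fun _ : α => ℂ) p)) := fun x =>
  mem_closure_of_tendsto (lp.hasSum_single hp x) <| .of_forall fun t =>
    Submodule.sum_mem _ fun k _ => by
      rw [← mul_one (x k), ← smul_eq_mul, lp.single_smul]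
      exact Submodule.smul_mem _ _ (Submodule.subset_span (Set.mem_range_self k))

lemma lp.norm_evalCLM_le {α : Type*} {p : ℝ≥0∞} [Fact (1 ≤ p)] (i : α) :
    ‖lp.evalCLM ℂ (fun _ : α => ℂ) p i‖ ≤ 1 :=
  LinearMap.mkContinuous_norm_le _ zero_le_one _

theorem stmt12 :
    (∀ w : ℤ → ℂ, (∀ k, w k ≠ 0) → BddWeight w →
      ∀ B : ZeroAtInftyContinuousMap ℤ ℂ →L[ℂ] ZeroAtInftyContinuousMap ℤ ℂ,
        IsBilateralWeightedShift c0Single w B →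
        TopDRecurrent B →
        ∀ r : ℕ, ∀ M > (0 : ℝ), ∀ j : ℤ, ∀ l : ℕ, 1 ≤ l → l ≤ r →
          InDstar {k : ℕ | l * k ∈ AMjZ w M j} ∧
          InDstar {k : ℕ | l * k ∈ AbarMjZ w M j}) ∧
    ∀ (p : ℝ≥0∞) [Fact (1 ≤ p)], p ≠ ∞ →
      ∀ w : ℤ → ℂ, (∀ k, w k ≠ 0) → BddWeight w →
      ∀ B : lp (fun _ : ℤ => ℂ) p →L[ℂ] lp (fun _ : ℤ => ℂ) p,
        IsBilateralWeightedShift (fun k => lp.single p k 1) w B →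
        TopDRecurrent B →
        ∀ r : ℕ, ∀ M > (0 : ℝ), ∀ j : ℤ, ∀ l : ℕ, 1 ≤ l → l ≤ r →
          InDstar {k : ℕ | l * k ∈ AMjZ w M j} ∧
          InDstar {k : ℕ | l * k ∈ AbarMjZ w M j} := by
  refine ⟨fun w _ _ B hB hrec _ M hM j l hl _ => ?_,
    fun p _ hp w _ _ B hB hrec _ M hM j l hl _ => ?_⟩
  · refine inDstar_of_topDRecurrent dense_span_range_c0Single
      ZeroAtInftyContinuousMap.norm_evalCLM_le (fun m k => ?_) hB hrec hM j hl
    simp [c0Single, eq_comm]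
  · refine inDstar_of_topDRecurrent (lp.dense_span_range_single hp) lp.norm_evalCLM_le
      (fun m k => ?_) hB hrec hM j hl
    simp [lp.evalCLM, lp.single_apply, Pi.single_apply, eq_comm]
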